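/- arXiv:1911.05618 — 2 statements merged into one kernel-verified Lean document; each statement's English description precedes it below -/
import Mathlib

section
/- Let V and V' be finite-dimensional vector spaces over an algebraically closed field k, let X ⊆ V' be a Zariski closed cone (nonempty and stable under scalar multiplication), and let f : X → V be a morphism of algebraic varieties that is homogeneous of some degree d ≥ 1 (f(λx) = λᵈ f(x)) and satisfies f(x) ≠ 0 for all x ∈ X \ {0}. Then f(X) is a Zariski closed cone in V. -/
open MvPolynomial Submodule

noncomputable section Aux18

namespace Aux18

variable {k : Type*} [Field k] {n : ℕ}

/-- Monomial exponents of total degree `N`. -/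
def Dg (n N : ℕ) : Type := {s : Fin n →₀ ℕ // s.degree = N}

instance (n N : ℕ) : DecidableEq (Dg n N) := Classical.decEq _

instance (n N : ℕ) : Finite (Dg n N) :=
  Set.Finite.to_subtype ((Finsupp.finite_of_degree_le N).subset (fun _ hs => le_of_eq hs))

noncomputable instance (n N : ℕ) : Fintype (Dg n N) := Fintype.ofFinite _

lemma eval_smul_homog {p : MvPolynomial (Fin n) k} {e : ℕ}
    (hp : p.IsHomogeneous e) (c : k) (x : Fin n → k) :
    eval (c • x) p = c ^ e * eval x p := by
  conv_lhs => rw [p.as_sum]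
  conv_rhs => rw [p.as_sum]
  rw [map_sum, map_sum, Finset.mul_sum]
  refine Finset.sum_congr rfl fun d hd => ?_
  rw [eval_monomial, eval_monomial]
  have hdeg : d.degree = e := by
    have := hp (mem_support_iff.mp hd)
    rwa [Finsupp.degree_eq_weight_one]
  have : (d.prod fun i j => (c • x) i ^ j) = c ^ e * d.prod fun i j => x i ^ j := by
    rw [Finsupp.prod, Finsupp.prod]
    have : ∀ i ∈ d.support, (c • x) i ^ d i = c ^ d i * x i ^ d i := by
      intro i _
      simp [mul_pow]
    rw [Finset.prod_congr rfl this, Finset.prod_mul_distrib,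
      Finset.prod_pow_eq_pow_sum]
    rw [← Finsupp.degree_apply, hdeg]
  rw [this]; ring

lemma eval_hc_line {p : MvPolynomial (Fin n) k} {x : Fin n → k}
    (h : ∀ c : k, eval (c • x) p = 0) [Infinite k] (i : ℕ) :
    eval x (homogeneousComponent i p) = 0 := by
  set q : Polynomial k := ∑ j ∈ Finset.range (p.totalDegree + 1),
    Polynomial.C (eval x (homogeneousComponent j p)) * Polynomial.X ^ j with hqdef
  have hq : ∀ c, q.eval c = 0 := by
    intro c
    rw [← h c]
    conv_rhs => rw [← p.sum_homogeneousComponent]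
    rw [map_sum, hqdef, Polynomial.eval_finset_sum]
    refine Finset.sum_congr rfl fun j _ => ?_
    rw [Polynomial.eval_mul, Polynomial.eval_C, Polynomial.eval_pow, Polynomial.eval_X,
      eval_smul_homog (homogeneousComponent_isHomogeneous j p) c x, mul_comm]
  have hq0 : q = 0 := Polynomial.zero_of_eval_zero q hq
  by_cases hi : i ≤ p.totalDegree
  · have hc := congrArg (fun r => Polynomial.coeff r i) hq0
    simp only [Polynomial.coeff_zero, hqdef, Polynomial.finset_sum_coeff,
      Polynomial.coeff_C_mul, Polynomial.coeff_X_pow] at hc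
    rw [Finset.sum_eq_single i (fun j _ hji => by simp [Ne.symm hji]) (by
      intro hni; exact absurd (Finset.mem_range.mpr (Nat.lt_succ_of_le hi)) hni)] at hc
    simpa using hc
  · rw [homogeneousComponent_eq_zero _ _ (lt_of_not_ge hi)]
    simp

lemma hc_mem_span {ι : Type*} (g : ι → MvPolynomial (Fin n) k)
    (e : ι → ℕ) (hg : ∀ a, (g a).IsHomogeneous (e a)) {p : MvPolynomial (Fin n) k}
    (hp : p ∈ Ideal.span (Set.range g)) (N : ℕ) :
    homogeneousComponent N p ∈ Ideal.span (Set.range g) := by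
  rw [Finsupp.mem_ideal_span_range_iff_exists_finsupp] at hp
  obtain ⟨c, rfl⟩ := hp
  rw [Finsupp.sum, map_sum]
  refine Ideal.sum_mem _ fun a _ => ?_
  have hca : c a * g a = ∑ j ∈ Finset.range ((c a).totalDegree + 1),
      homogeneousComponent j (c a) * g a := by
    rw [← Finset.sum_mul, sum_homogeneousComponent]
  rw [hca, map_sum]
  refine Ideal.sum_mem _ fun j _ => ?_
  have hhom : (homogeneousComponent j (c a) * g a).IsHomogeneous (j + e a) :=
    (homogeneousComponent_isHomogeneous j (c a)).mul (hg a)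
  rw [homogeneousComponent_of_mem hhom]
  by_cases hN : N = j + e a
  · simp only [hN, if_true]
    exact Ideal.mul_mem_left _ _ (Ideal.subset_span (Set.mem_range_self a))
  · simp [hN]

lemma span_eq_top_iff_det {B : Type*} [Fintype B] [DecidableEq B] {C : Type*}
    (w : C → B → k) :
    Submodule.span k (Set.range w) = ⊤ ↔
      ∃ g : B → C, (Matrix.of fun i j => w (g j) i).det ≠ 0 := by
  constructor
  · intro hspan
    obtain ⟨s, hsub, hsp, hli⟩ := exists_linearIndependent k (Set.range w)
    rw [hspan] at hsp
    let b : Module.Basis s k (B → k) :=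
      Module.Basis.mk hli (by rw [Subtype.range_coe_subtype, Set.setOf_mem_eq, hsp])
    let eqv : s ≃ B := b.indexEquiv (Pi.basisFun k B)
    let v : B → (B → k) := fun i => (b.reindex eqv) i
    have hunit : IsUnit ((Pi.basisFun k B).det v) :=
      (Pi.basisFun k B).isUnit_det (b.reindex eqv)
    have hmem : ∀ i : B, v i ∈ Set.range w := by
      intro i
      apply hsub
      have : v i = ((eqv.symm i : s) : B → k) := by
        simp [v, Module.Basis.reindex_apply, b, Module.Basis.mk_apply]
      rw [this]
      exact (eqv.symm i).2
    choose g hg using hmem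
    refine ⟨g, ?_⟩
    have hmat : (Pi.basisFun k B).det v = (Matrix.of fun i j => w (g j) i).det := by
      rw [Module.Basis.det_apply]
      congr 1
      ext i j
      rw [Module.Basis.toMatrix_apply, Pi.basisFun_repr, Matrix.of_apply, hg j]
    rw [hmat] at hunit
    exact isUnit_iff_ne_zero.mp hunit
  · rintro ⟨g, hdet⟩
    set M : Matrix B B k := Matrix.of fun i j => w (g j) i with hM
    have hunit : IsUnit M := (Matrix.isUnit_iff_isUnit_det M).mpr (isUnit_iff_ne_zero.mpr hdet)
    have hli : LinearIndependent k (fun j => M.transpose j) :=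
      Matrix.linearIndependent_cols_iff_isUnit.mpr hunit
    have hsp : span k (Set.range fun j => M.transpose j) = ⊤ :=
      hli.span_eq_top_of_card_eq_finrank' (by simp)
    have hrange : (Set.range fun j => M.transpose j) ⊆ Set.range w := by
      rintro _ ⟨j, rfl⟩
      exact ⟨g j, by ext i; simp [hM, Matrix.transpose_apply]⟩
    rw [eq_top_iff, ← hsp]
    exact span_mono hrange

lemma map_homogeneousComponent {R S : Type*} [CommSemiring R] [CommSemiring S] (f : R →+* S)
    (e : ℕ) (q : MvPolynomial (Fin n) R) :
    map f (homogeneousComponent e q) = homogeneousComponent e (map f q) := by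
  ext d
  rw [coeff_map, coeff_homogeneousComponent, coeff_homogeneousComponent]
  split_ifs
  · rw [coeff_map]
  · exact map_zero f

/-- The coefficient-extraction linear map onto degree-`N` coordinates. -/
def phi (k : Type*) [Field k] (n N : ℕ) :
    MvPolynomial (Fin n) k →ₗ[k] (Dg n N → k) :=
  LinearMap.pi (fun μ => lcoeff k μ.1)

@[simp] lemma phi_apply (N : ℕ) (p : MvPolynomial (Fin n) k) (μ : Dg n N) :
    phi k n N p μ = coeff μ.1 p := rfl

lemma phi_monomial {N : ℕ} (μ : Dg n N) :
    phi k n N (monomial μ.1 (1 : k)) = Pi.single μ 1 := by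
  ext ν
  rw [phi_apply, coeff_monomial, Pi.single_apply]
  by_cases h : ν = μ
  · subst h; simp
  · rw [if_neg h, if_neg (fun he => h (Subtype.ext he.symm))]

lemma monomials_mem_iff_span_top {ι : Type*} (g : ι → MvPolynomial (Fin n) k)
    (e : ι → ℕ) (hg : ∀ a, (g a).IsHomogeneous (e a)) (N : ℕ) :
    (∀ μ : Dg n N, (monomial μ.1 (1 : k)) ∈ Ideal.span (Set.range g)) ↔
      Submodule.span k (Set.range (fun c : ι × (Fin n →₀ ℕ) =>
        fun μ : Dg n N => coeff μ.1 (monomial c.2 1 * g c.1))) = ⊤ := by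
  have key : Submodule.span k (Set.range (fun c : ι × (Fin n →₀ ℕ) =>
      fun μ : Dg n N => coeff μ.1 (monomial c.2 1 * g c.1))) =
      Submodule.map (phi k n N) ((Ideal.span (Set.range g)).restrictScalars k) := by
    apply le_antisymm
    · rw [span_le]
      rintro _ ⟨c, rfl⟩
      exact ⟨monomial c.2 1 * g c.1,
        Ideal.mul_mem_left _ _ (Ideal.subset_span (Set.mem_range_self c.1)), rfl⟩
    · rintro _ ⟨p, hp, rfl⟩
      have hp' : p ∈ Ideal.span (Set.range g) := hp
      rw [Finsupp.mem_ideal_span_range_iff_exists_finsupp] at hp'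
      obtain ⟨c, rfl⟩ := hp'
      rw [Finsupp.sum, map_sum]
      refine Submodule.sum_mem _ fun a _ => ?_
      have expand : c a * g a =
          ∑ q ∈ (c a).support, coeff q (c a) • (monomial q 1 * g a) := by
        conv_lhs => rw [(c a).as_sum, Finset.sum_mul]
        refine Finset.sum_congr rfl fun q _ => ?_
        rw [← smul_mul_assoc, smul_monomial, smul_eq_mul, mul_one]
      rw [expand, map_sum]
      refine Submodule.sum_mem _ fun q _ => ?_
      rw [map_smul]
      exact Submodule.smul_mem _ _ (Submodule.subset_span (Set.mem_range_self (a, q)))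
  rw [key]
  constructor
  · intro hmem
    rw [eq_top_iff, ← (Pi.basisFun k (Dg n N)).span_eq, span_le]
    rintro _ ⟨μ, rfl⟩
    rw [Pi.basisFun_apply]
    refine ⟨monomial μ.1 1, hmem μ, ?_⟩
    rw [phi_monomial]
  · intro htop μ
    have : Pi.single μ (1:k) ∈ Submodule.map (phi k n N)
        ((Ideal.span (Set.range g)).restrictScalars k) := htop ▸ Submodule.mem_top
    obtain ⟨p, hp, hφ⟩ := this
    have hpN : homogeneousComponent N p = monomial μ.1 1 := by
      ext d
      rw [coeff_homogeneousComponent, coeff_monomial]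
      by_cases hd : d.degree = N
      · rw [if_pos hd]
        have hcd := congrFun hφ ⟨d, hd⟩
        change coeff d p = (Pi.single μ (1:k) : Dg n N → k) (⟨d, hd⟩ : Dg n N) at hcd
        rw [hcd, Pi.single_apply μ (1:k) (⟨d, hd⟩ : Dg n N)]
        by_cases h : (⟨d, hd⟩ : Dg n N) = μ
        · rw [if_pos (congrArg Subtype.val h).symm]; exact if_pos h
        · rw [if_neg fun (he : μ.1 = d) => h (Subtype.ext he.symm)]; exact if_neg h
      · rw [if_neg hd, if_neg (fun (he : μ.1 = d) => hd (he ▸ μ.2))]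
    exact hpN ▸ hc_mem_span g e hg hp N

variable {m : ℕ}

/-- Index type for the homogeneous generators of the incidence ideal. -/
def Gidx (P : Set (MvPolynomial (Fin n) k)) (m : ℕ) : Type _ := (↥P ⊕ Fin m × Fin m) × ℕ

/-- The generators, as polynomials in `x` with coefficients polynomials in `y`. -/
def bigGen (P : Set (MvPolynomial (Fin n) k)) (F : Fin m → MvPolynomial (Fin n) k) :
    Gidx P m → MvPolynomial (Fin n) (MvPolynomial (Fin m) k)
  | (Sum.inl p, e) => homogeneousComponent e (MvPolynomial.map C p.1)
  | (Sum.inr (i, j), e) =>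
      homogeneousComponent e (C (X j) * MvPolynomial.map C (F i) - C (X i) * MvPolynomial.map C (F j))

/-- The generators specialized at a point `y`, before taking homogeneous components. -/
def baseGen (P : Set (MvPolynomial (Fin n) k)) (F : Fin m → MvPolynomial (Fin n) k)
    (y : Fin m → k) : Gidx P m → MvPolynomial (Fin n) k
  | (Sum.inl p, _) => p.1
  | (Sum.inr (i, j), _) => C (y j) * F i - C (y i) * F j

lemma map_C_eval (y : Fin m → k) (q : MvPolynomial (Fin n) k) :
    MvPolynomial.map (eval y) (MvPolynomial.map (C : k →+* MvPolynomial (Fin m) k) q) = q := by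
  rw [MvPolynomial.map_map]
  have hcomp : (eval y).comp (C : k →+* MvPolynomial (Fin m) k) = RingHom.id k :=
    RingHom.ext fun a => eval_C _
  rw [hcomp]
  exact MvPolynomial.map_id q

lemma map_bigGen (P : Set (MvPolynomial (Fin n) k)) (F : Fin m → MvPolynomial (Fin n) k)
    (y : Fin m → k) (a : Gidx P m) :
    MvPolynomial.map (eval y) (bigGen P F a) = homogeneousComponent a.2 (baseGen P F y a) := by
  obtain ⟨s, e⟩ := a
  rcases s with p | ⟨i, j⟩
  · rw [bigGen, baseGen, map_homogeneousComponent, map_C_eval]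
  · rw [bigGen, baseGen, map_homogeneousComponent]
    congr 1
    rw [map_sub, map_mul, map_mul, map_C_eval, map_C_eval, map_C, map_C, eval_X, eval_X]

end Aux18

end Aux18

open Aux18

/-- Over an algebraically closed field `k`, let `X ⊆ kⁿ` be a Zariski
closed cone (the zero locus of a set of polynomials, nonempty and stable under scalars),
and let `f : X → kᵐ` be a morphism of algebraic varieties (given by polynomials) which is
homogeneous of degree `d ≥ 1` and has `f(x) ≠ 0` for all `x ∈ X \ {0}`.  Then `f(X)` is a
Zariski closed cone in `kᵐ`. -/
theorem image_of_homogeneous_morphism_is_closed_cone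
    (k : Type*) [Field k] [IsAlgClosed k] (n m : ℕ)
    (P : Set (MvPolynomial (Fin n) k))
    (X : Set (Fin n → k)) (hX : X = {x | ∀ p ∈ P, eval x p = 0})
    (hXne : X.Nonempty) (hXcone : ∀ (c : k), ∀ x ∈ X, c • x ∈ X)
    (F : Fin m → MvPolynomial (Fin n) k)
    (f : (Fin n → k) → (Fin m → k)) (hf : ∀ x i, f x i = eval x (F i))
    (d : ℕ) (hd : 1 ≤ d)
    (hhom : ∀ (c : k) (x : Fin n → k), f (c • x) = c ^ d • f x)
    (hnz : ∀ x ∈ X, x ≠ 0 → f x ≠ 0) :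
    (∃ Q : Set (MvPolynomial (Fin m) k), f '' X = {y | ∀ q ∈ Q, eval y q = 0}) ∧
    (f '' X).Nonempty ∧ (∀ (c : k), ∀ y ∈ f '' X, c • y ∈ f '' X) := by
  classical
  have h0X : (0 : Fin n → k) ∈ X := by
    obtain ⟨x, hx⟩ := hXne
    simpa using hXcone 0 x hx
  have hf0 : f 0 = 0 := by
    have h := hhom 0 0
    rw [smul_zero] at h
    rw [h, zero_pow (by omega : d ≠ 0), zero_smul]
  have himg0 : (0 : Fin m → k) ∈ f '' X := ⟨0, h0X, hf0⟩
  have hcone : ∀ (c : k), ∀ y ∈ f '' X, c • y ∈ f '' X := by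
    rintro c _ ⟨x, hx, rfl⟩
    obtain ⟨t, ht⟩ := IsAlgClosed.exists_pow_nat_eq c (show 0 < d by omega)
    exact ⟨t • x, hXcone t x hx, by rw [hhom, ht]⟩
  refine ⟨?_, ⟨0, himg0⟩, hcone⟩
  by_cases hX0 : ∀ x ∈ X, x = 0
  · refine ⟨Set.range (fun i : Fin m => (MvPolynomial.X i : MvPolynomial (Fin m) k)), ?_⟩
    ext y
    simp only [Set.mem_setOf_eq]
    constructor
    · rintro ⟨x, hx, rfl⟩ q ⟨i, rfl⟩
      rw [hX0 x hx, hf0]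
      simp
    · intro hy
      have hy0 : y = 0 := funext fun i => by simpa using hy (MvPolynomial.X i) ⟨i, rfl⟩
      exact hy0 ▸ himg0
  · push_neg at hX0
    obtain ⟨x0, hx0X, hx0⟩ := hX0
    set gen : (Fin m → k) → Gidx P m → MvPolynomial (Fin n) k :=
      fun y a => map (eval y) (bigGen P F a) with hgendef
    have hgen_eq : ∀ y a, gen y a = homogeneousComponent a.2 (baseGen P F y a) :=
      fun y a => map_bigGen P F y a
    have hgenhom : ∀ y a, (gen y a).IsHomogeneous a.2 := fun y a => by
      rw [hgen_eq]; exact homogeneousComponent_isHomogeneous _ _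
    set Iy : (Fin m → k) → Ideal (MvPolynomial (Fin n) k) :=
      fun y => Ideal.span (Set.range (gen y)) with hIydef
    -- characterization of the zero locus
    have hZ : ∀ y x, x ∈ zeroLocus k (Iy y) ↔
        (x ∈ X ∧ ∀ i j, y j * f x i = y i * f x j) := by
      intro y x
      constructor
      · intro hx
        have hx' : ∀ a, eval x (gen y a) = 0 :=
          fun a => hx _ (Ideal.subset_span (Set.mem_range_self a))
        constructor
        · rw [hX]
          intro p hp
          have hsum := congrArg (eval x) (sum_homogeneousComponent p)
          rw [map_sum] at hsum
          rw [← hsum]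
          refine Finset.sum_eq_zero fun e _ => ?_
          have h1 := hx' (Sum.inl ⟨p, hp⟩, e)
          rwa [hgen_eq y (Sum.inl ⟨p, hp⟩, e)] at h1
        · intro i j
          set g : MvPolynomial (Fin n) k := C (y j) * F i - C (y i) * F j with hg
          have hgeval : eval x g = y j * f x i - y i * f x j := by
            simp [hg, hf]
          have hsum := congrArg (eval x) (sum_homogeneousComponent g)
          rw [map_sum] at hsum
          have hz : eval x g = 0 := by
            rw [← hsum]
            refine Finset.sum_eq_zero fun e _ => ?_
            have h1 := hx' (Sum.inr (i, j), e)
            rwa [hgen_eq y (Sum.inr (i, j), e)] at h1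
          rw [hgeval] at hz
          exact sub_eq_zero.mp hz
      · rintro ⟨hxX, hprop⟩
        have hzl : zeroLocus k (Iy y) = {x | ∀ p ∈ Set.range (gen y), eval x p = 0} :=
          zeroLocus_span _
        rw [hzl]
        rintro _ ⟨a, rfl⟩
        obtain ⟨s, e⟩ := a
        rcases s with p | ⟨i, j⟩
        · rw [hgen_eq y (Sum.inl p, e)]
          refine eval_hc_line (fun c => ?_) e
          have hc : c • x ∈ X := hXcone c x hxX
          rw [hX] at hc
          exact hc _ p.2
        · rw [hgen_eq y (Sum.inr (i, j), e)]
          refine eval_hc_line (fun c => ?_) e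
          have hgeval : eval (c • x) (baseGen P F y (Sum.inr (i, j), e))
              = y j * f (c • x) i - y i * f (c • x) j := by
            simp [baseGen, hf]
          rw [hgeval, hhom c x]
          simp only [Pi.smul_apply, smul_eq_mul]
          rw [show y j * (c ^ d * f x i) - y i * (c ^ d * f x j)
              = c ^ d * (y j * f x i - y i * f x j) from by ring,
            hprop i j, sub_self, mul_zero]
    -- membership in the image in terms of nonzero points of the zero locus
    have hB : ∀ y, y ∈ f '' X ↔ ∃ x ∈ zeroLocus k (Iy y), x ≠ 0 := by
      intro y
      constructor
      · rintro ⟨x, hxX, rfl⟩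
        by_cases hx : x = 0
        · subst hx
          refine ⟨x0, (hZ _ x0).mpr ⟨hx0X, fun i j => ?_⟩, hx0⟩
          rw [hf0]
          simp
        · exact ⟨x, (hZ _ x).mpr ⟨hxX, fun i j => by ring⟩, hx⟩
      · rintro ⟨x, hxZ, hxne⟩
        obtain ⟨hxX, hprop⟩ := (hZ y x).mp hxZ
        by_cases hy : y = 0
        · subst hy; exact himg0
        · have hfx : f x ≠ 0 := hnz x hxX hxne
          obtain ⟨j0, hj0⟩ : ∃ j0, y j0 ≠ 0 := by
            by_contra h
            push_neg at h
            exact hy (funext h)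
          set c : k := f x j0 / y j0 with hc
          have hfxc : ∀ i, f x i = c * y i := by
            intro i
            have hp := hprop i j0
            rw [hc]
            field_simp
            linear_combination hp
          have hcne : c ≠ 0 := by
            intro h0
            apply hfx
            funext i
            rw [Pi.zero_apply, hfxc i, h0, zero_mul]
          obtain ⟨t, ht⟩ := IsAlgClosed.exists_pow_nat_eq c⁻¹ (show 0 < d by omega)
          refine ⟨t • x, hXcone t x hxX, ?_⟩
          rw [hhom, ht]
          funext i
          rw [Pi.smul_apply, smul_eq_mul, hfxc i, ← mul_assoc, inv_mul_cancel₀ hcne, one_mul]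
    -- nonzero points of the zero locus in terms of monomial membership
    have hdegsingle : ∀ (i : Fin n) (N : ℕ), (Finsupp.single i N).degree = N := by
      intro i N
      rcases Nat.eq_zero_or_pos N with h | h
      · subst h; simp
      · rw [Finsupp.degree_apply, Finsupp.support_single_ne_zero _ (Nat.pos_iff_ne_zero.mp h),
          Finset.sum_singleton, Finsupp.single_eq_same]
    have hC : ∀ y, (∃ x ∈ zeroLocus k (Iy y), x ≠ 0) ↔
        ∀ N : ℕ, ¬ (∀ μ : Dg n N, (monomial μ.1 (1 : k)) ∈ Iy y) := by
      intro y
      constructor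
      · rintro ⟨x, hxZ, hxne⟩ N hall
        obtain ⟨i, hi⟩ : ∃ i, x i ≠ 0 := by
          by_contra h
          push_neg at h
          exact hxne (funext h)
        have hmem := hall ⟨Finsupp.single i N, hdegsingle i N⟩
        rw [← X_pow_eq_monomial] at hmem
        have hev := hxZ _ hmem
        rw [map_pow, aeval_X] at hev
        exact pow_ne_zero N hi hev
      · intro hnot
        by_contra hnone
        push_neg at hnone
        have hsub : ∀ i : Fin n, (MvPolynomial.X i : MvPolynomial (Fin n) k) ∈ (Iy y).radical := by
          intro i
          rw [← vanishingIdeal_zeroLocus_eq_radical (K := k), mem_vanishingIdeal_iff]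
          intro x hx
          rw [aeval_X]
          exact congrFun (hnone x hx) i
        choose Ni hNi using fun i => (Ideal.mem_radical_iff.mp (hsub i))
        apply hnot ((∑ i, Ni i) + 1)
        intro μ
        obtain ⟨i, hige⟩ : ∃ i, Ni i ≤ μ.1 i := by
          by_contra h
          push_neg at h
          have h1 : ∑ i, μ.1 i ≤ ∑ i, Ni i := Finset.sum_le_sum fun i _ => le_of_lt (h i)
          have h2 : μ.1.degree = ∑ i, μ.1 i :=
            Finset.sum_subset (Finset.subset_univ _)
              (fun i _ hi => Finsupp.notMem_support_iff.mp hi)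
          have h3 := μ.2
          omega
        have hle : Finsupp.single i (Ni i) ≤ μ.1 := Finsupp.single_le_iff.mpr hige
        have hmono : (monomial μ.1 (1 : k))
            = monomial (μ.1 - Finsupp.single i (Ni i)) 1 * MvPolynomial.X i ^ Ni i := by
          rw [X_pow_eq_monomial, monomial_mul, one_mul, tsub_add_cancel_of_le hle]
        rw [hmono]
        exact Ideal.mul_mem_left _ _ (hNi i)
    -- the polynomial matrices and their determinants
    set Wpoly : (N : ℕ) → (Gidx P m × (Fin n →₀ ℕ)) → Dg n N → MvPolynomial (Fin m) k :=
      fun N c μ => coeff μ.1 (monomial c.2 1 * bigGen P F c.1) with hWdef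
    set Q : Set (MvPolynomial (Fin m) k) :=
      ⋃ N : ℕ, Set.range (fun g : Dg n N → (Gidx P m × (Fin n →₀ ℕ)) =>
        (Matrix.of fun μ ν => Wpoly N (g ν) μ).det) with hQdef
    have hWeval : ∀ (y : Fin m → k) N c (μ : Dg n N),
        eval y (Wpoly N c μ) = coeff μ.1 (monomial c.2 1 * gen y c.1) := by
      intro y N c μ
      rw [hWdef, ← coeff_map, map_mul, map_monomial, map_one, hgendef]
    have hdet : ∀ (y : Fin m → k) N (g : Dg n N → (Gidx P m × (Fin n →₀ ℕ))),
        eval y ((Matrix.of fun μ ν => Wpoly N (g ν) μ).det)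
          = (Matrix.of (fun (μ ν : Dg n N) =>
              coeff μ.1 (monomial (g ν).2 1 * gen y (g ν).1))).det := by
      intro y N g
      rw [RingHom.map_det]
      congr 1
      ext μ ν
      rw [RingHom.mapMatrix_apply, Matrix.map_apply, Matrix.of_apply, Matrix.of_apply, hWeval,
        hgendef]
    refine ⟨Q, ?_⟩
    ext y
    rw [Set.mem_setOf_eq, hB y, hC y]
    constructor
    · intro hall q hq
      rw [hQdef] at hq
      simp only [Set.mem_iUnion, Set.mem_range] at hq
      obtain ⟨N, g, rfl⟩ := hq
      by_contra hne
      apply hall N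
      rw [monomials_mem_iff_span_top (gen y) (fun a => a.2) (hgenhom y) N,
        span_eq_top_iff_det]
      refine ⟨g, ?_⟩
      rw [← hdet]
      exact hne
    · intro hq N hmon
      rw [monomials_mem_iff_span_top (gen y) (fun a => a.2) (hgenhom y) N,
        span_eq_top_iff_det] at hmon
      obtain ⟨g, hg⟩ := hmon
      apply hg
      rw [← hdet]
      exact hq _ (Set.mem_iUnion.mpr ⟨N, Set.mem_range_self g⟩)
end

section
/- Let Λ = ∧⁴ M₄(ℤ) inside V = ∧⁴ M₄(ℚ), let ι₀ : M₂(ℚ) → M₄(ℚ) be A ↦ diag-block(A,A), and let v₀ = ι₀(e₁) ∧ ι₀(e₂) ∧ ι₀(e₃) ∧ ι₀(e₄), where e₁,…,e₄ is the standard basis of M₂(ℤ) (matrix units). Let G = GSp₄ act on V by ρ_L = (∧⁴ of left multiplication) ⊗ det^{−1}. Then the stabiliser of v₀ in GSp₄ equals the image ι₀(GL₂) ∩ GSp₄, i.e. the block-diagonally embedded GL₂. -/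
/-!
Write `uᵢ = ι₀(eᵢ)`; these are linearly independent and span the image of `ι₀`.

If `g = ι₀(A)`, then `g uᵢ = ι₀(A eᵢ)`, so `g u₁ ∧ ⋯ ∧ g u₄` is the image of `v₀` under the top
exterior power of left multiplication by `A` on `M₂`, whose determinant is
`det(A)² = det(ι₀(A))`; hence `ρ_L(g)` fixes `v₀`.

Conversely, `g = g u₁ + g u₄` lies in the span of the `g uᵢ`, so `g ∧ g u₁ ∧ ⋯ ∧ g u₄ = 0`.
If `ρ_L(g) v₀ = v₀`, this says `g ∧ v₀ = 0`, and since the `uᵢ` are linearly independent,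
`g` lies in their span, i.e. `g = ι₀(A)`, with `A` invertible because `det g = det(A)²`.
-/

open Matrix

/-- The standard symplectic form on `ℚ⁴`, with Gram matrix `diag(J, J)`,
`J = [[0,1],[−1,0]]`. -/
def stdSympQ (x y : Fin 4 → ℚ) : ℚ :=
  x 0 * y 1 - x 1 * y 0 + x 2 * y 3 - x 3 * y 2

/-- The block-diagonal embedding `ι₀ : M₂(ℚ) → M₄(ℚ)`, `A ↦ diag(A, A)`. -/
def iota0 (A : Matrix (Fin 2) (Fin 2) ℚ) : Matrix (Fin 4) (Fin 4) ℚ :=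
  Matrix.reindex (finSumFinEquiv (m := 2) (n := 2)) (finSumFinEquiv (m := 2) (n := 2))
    (Matrix.fromBlocks A 0 0 A)

/-- The wedge `w₁ ∧ w₂ ∧ w₃ ∧ w₄` in `∧• M₄(ℚ)`, as a product in the exterior algebra. -/
noncomputable def wedge4 (w₁ w₂ w₃ w₄ : Matrix (Fin 4) (Fin 4) ℚ) :
    ExteriorAlgebra ℚ (Matrix (Fin 4) (Fin 4) ℚ) :=
  ExteriorAlgebra.ι ℚ w₁ * ExteriorAlgebra.ι ℚ w₂ *
    ExteriorAlgebra.ι ℚ w₃ * ExteriorAlgebra.ι ℚ w₄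

/-- The vector `v₀ = ι₀(e₁) ∧ ι₀(e₂) ∧ ι₀(e₃) ∧ ι₀(e₄)`, where `e₁,…,e₄` are the matrix
units of `M₂`. -/
noncomputable def v0 : ExteriorAlgebra ℚ (Matrix (Fin 4) (Fin 4) ℚ) :=
  wedge4 (iota0 (Matrix.single 0 0 1)) (iota0 (Matrix.single 0 1 1))
    (iota0 (Matrix.single 1 0 1)) (iota0 (Matrix.single 1 1 1))

open ExteriorAlgebra
open scoped Kronecker

theorem Module.Basis.span_range_comp {ι R M N : Type*} [Semiring R] [AddCommMonoid M]
    [Module R M] [AddCommMonoid N] [Module R N] (b : Module.Basis ι R M) (f : M →ₗ[R] N) :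
    Submodule.span R (Set.range (f ∘ b)) = LinearMap.range f := by
  rw [Set.range_comp, ← Submodule.map_span, b.span_eq, Submodule.map_top]

section CommRing

variable {R M : Type*} [CommRing R] [AddCommGroup M] [Module R M]

theorem ExteriorAlgebra.ι_mul_ιMulti_eq_zero_of_mem_span {n : ℕ} {v : Fin n → M} {x : M}
    (hx : x ∈ Submodule.span R (Set.range v)) : ι R x * ιMulti R n v = 0 := by
  suffices Submodule.span R (Set.range v) ≤
      LinearMap.ker (LinearMap.mulRight R (ιMulti R n v) ∘ₗ ι R) from this hx
  rw [Submodule.span_le]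
  rintro _ ⟨i, rfl⟩
  exact ι_mul_prod_list v i

theorem AlternatingMap.map_comp_basis_eq_det_smul {ι N : Type*} [Fintype ι] [DecidableEq ι]
    [AddCommGroup N] [Module R N] [Module.Projective R N]
    (φ : M [⋀^ι]→ₗ[R] N) (e : Module.Basis ι R M) (f : M →ₗ[R] M) :
    φ (f ∘ e) = LinearMap.det f • φ e := by
  rw [← sub_eq_zero, ← Module.forall_dual_apply_eq_zero_iff R]
  intro χ
  have h := congr($((χ.compAlternatingMap φ).eq_smul_basis_det e) (f ∘ e))
  simp only [LinearMap.compAlternatingMap_apply, AlternatingMap.smul_apply, e.det_comp,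
    e.det_self] at h
  simp [h, mul_comm]

theorem Matrix.det_mulLeft {n : Type*} [Fintype n] [DecidableEq n] (A : Matrix n n R) :
    LinearMap.det (LinearMap.mulLeft R A) = A.det ^ Fintype.card n := by
  have h : LinearMap.toMatrix (stdBasis R n n) (stdBasis R n n) (LinearMap.mulLeft R A) =
      A ⊗ₖ 1 := by
    ext ⟨i, j⟩ ⟨k, l⟩
    simp [LinearMap.toMatrix_apply, stdBasis, one_apply, mul_apply, Pi.single_apply, ite_apply,
      mul_ite]
  rw [← LinearMap.det_toMatrix (stdBasis R n n), h, det_kronecker, det_one, one_pow, mul_one]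

end CommRing

section Field

variable {K E : Type*} [Field K] [AddCommGroup E] [Module K E]

theorem ExteriorAlgebra.ιMulti_ne_zero_of_linearIndependent {n : ℕ} {v : Fin n → E}
    (hv : LinearIndependent K v) : ιMulti K n v ≠ 0 := by
  have := (exteriorPower.ιMulti_family_linearIndependent_field (n := n) hv).ne_zero
    (Set.powersetCard.ofFinEmbEquiv (RelEmbedding.refl _))
  simpa [exteriorPower.ιMulti_family, ← Submodule.coe_eq_zero] using this

theorem ExteriorAlgebra.mem_span_of_ι_mul_ιMulti_eq_zero {n : ℕ} {v : Fin n → E} {x : E}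
    (hv : LinearIndependent K v) (h : ι K x * ιMulti K n v = 0) :
    x ∈ Submodule.span K (Set.range v) := by
  by_contra hx
  have hcons : LinearIndependent K (Fin.cons x v : Fin (n + 1) → E) :=
    linearIndependent_finCons.mpr ⟨hv, hx⟩
  apply ιMulti_ne_zero_of_linearIndependent hcons
  rw [ιMulti_succ_apply]
  exact h

end Field

theorem iota0_mul (A B : Matrix (Fin 2) (Fin 2) ℚ) : iota0 (A * B) = iota0 A * iota0 B := by
  simp [iota0, submatrix_mul_equiv, fromBlocks_multiply]

theorem iota0_one : iota0 1 = 1 := by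
  simp [iota0]

theorem det_iota0 (A : Matrix (Fin 2) (Fin 2) ℚ) : (iota0 A).det = A.det ^ 2 := by
  simp [iota0, det_fromBlocks_zero₂₁, sq]

def iota0LinearMap : Matrix (Fin 2) (Fin 2) ℚ →ₗ[ℚ] Matrix (Fin 4) (Fin 4) ℚ where
  toFun := iota0
  map_add' A B := by
    simp only [iota0, ← coe_reindexLinearEquiv ℚ ℚ, ← map_add, fromBlocks_add, add_zero]
  map_smul' c A := by
    simp only [iota0, ← coe_reindexLinearEquiv ℚ ℚ, ← map_smul, fromBlocks_smul, smul_zero,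
      RingHom.id_apply]

theorem iota0LinearMap_injective : Function.Injective iota0LinearMap := by
  intro A B h
  ext i j
  simpa [iota0LinearMap, iota0] using congr_fun₂ h
    (finSumFinEquiv (m := 2) (n := 2) (.inl i)) (finSumFinEquiv (m := 2) (n := 2) (.inl j))

/-- `e₁, e₂, e₃, e₄`: the matrix unit `single i j 1` sits at index `2 i + j`. -/
noncomputable def matrixUnitBasis : Module.Basis (Fin 4) ℚ (Matrix (Fin 2) (Fin 2) ℚ) :=
  (stdBasis ℚ (Fin 2) (Fin 2)).reindex finProdFinEquiv

theorem wedge4_mul_iota0_eq_ιMulti (g : Matrix (Fin 4) (Fin 4) ℚ) :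
    wedge4 (g * iota0 (single 0 0 1)) (g * iota0 (single 0 1 1))
      (g * iota0 (single 1 0 1)) (g * iota0 (single 1 1 1)) =
    ιMulti ℚ 4 fun k => g * iota0 (matrixUnitBasis k) := by
  have h : ∀ i j, matrixUnitBasis (finProdFinEquiv (i, j)) = single i j 1 := by
    simp [matrixUnitBasis, stdBasis_eq_single]
  rw [ιMulti_apply, ← h 0 0, ← h 0 1, ← h 1 0, ← h 1 1]
  simp only [wedge4, List.ofFn_succ, List.ofFn_zero, List.prod_cons, List.prod_nil, mul_one,
    mul_assoc]
  rfl

theorem v0_eq_ιMulti : v0 = ιMulti ℚ 4 (iota0LinearMap ∘ matrixUnitBasis) := by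
  have h := wedge4_mul_iota0_eq_ιMulti 1
  simp only [one_mul] at h
  exact h

theorem ι_mul_ιMulti_mul_iota0_eq_zero (g : Matrix (Fin 4) (Fin 4) ℚ) :
    ι ℚ g * ιMulti ℚ 4 (fun k => g * iota0 (matrixUnitBasis k)) = 0 := by
  apply ι_mul_ιMulti_eq_zero_of_mem_span
  change g ∈ Submodule.span ℚ
    (Set.range ((LinearMap.mulLeft ℚ g ∘ₗ iota0LinearMap) ∘ matrixUnitBasis))
  rw [matrixUnitBasis.span_range_comp]
  exact ⟨1, by simp [iota0LinearMap, iota0_one]⟩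

theorem exists_eq_iota0_of_ι_mul_v0_eq_zero {x : Matrix (Fin 4) (Fin 4) ℚ}
    (h : ι ℚ x * v0 = 0) : ∃ A, x = iota0 A := by
  have hli := matrixUnitBasis.linearIndependent.map' iota0LinearMap
    (LinearMap.ker_eq_bot.mpr iota0LinearMap_injective)
  rw [v0_eq_ιMulti] at h
  obtain ⟨A, hA⟩ := matrixUnitBasis.span_range_comp iota0LinearMap ▸
    mem_span_of_ι_mul_ιMulti_eq_zero hli h
  exact ⟨A, hA.symm⟩

theorem ιMulti_iota0_mul_eq_det_smul_v0 (A : Matrix (Fin 2) (Fin 2) ℚ) :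
    ιMulti ℚ 4 (fun k => iota0 A * iota0 (matrixUnitBasis k)) = (iota0 A).det • v0 := by
  have h := ((ιMulti ℚ 4).compLinearMap iota0LinearMap).map_comp_basis_eq_det_smul
    matrixUnitBasis (LinearMap.mulLeft ℚ A)
  simp only [AlternatingMap.compLinearMap_apply, Matrix.det_mulLeft] at h
  rw [det_iota0, v0_eq_ιMulti]
  simpa [iota0_mul, Function.comp_def, iota0LinearMap] using h

theorem stabiliser_of_v0_eq_blockdiag_GL2_general
    (g : Matrix (Fin 4) (Fin 4) ℚ) (hg : IsUnit g) :
    (g.det)⁻¹ • wedge4 (g * iota0 (Matrix.single 0 0 1))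
        (g * iota0 (Matrix.single 0 1 1))
        (g * iota0 (Matrix.single 1 0 1))
        (g * iota0 (Matrix.single 1 1 1)) = v0
      ↔ ∃ A : Matrix (Fin 2) (Fin 2) ℚ, IsUnit A ∧ g = iota0 A := by
  have hdet : g.det ≠ 0 := ((isUnit_iff_isUnit_det g).mp hg).ne_zero
  rw [wedge4_mul_iota0_eq_ιMulti]
  constructor
  · intro h
    have hv0 : ι ℚ g * v0 = 0 := by
      rw [← h, mul_smul_comm, ι_mul_ιMulti_mul_iota0_eq_zero, smul_zero]
    obtain ⟨A, rfl⟩ := exists_eq_iota0_of_ι_mul_v0_eq_zero hv0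
    refine ⟨A, ?_, rfl⟩
    rw [isUnit_iff_isUnit_det, isUnit_iff_ne_zero]
    rintro hA
    simp [det_iota0, hA] at hdet
  · rintro ⟨A, -, rfl⟩
    rw [ιMulti_iota0_mul_eq_det_smul_v0, smul_smul, inv_mul_cancel₀ hdet, one_smul]

/-- Let `GSp₄` act on `∧⁴ M₄(ℚ)` by
`ρ_L(g) = det(g)⁻¹ · (∧⁴ of left multiplication by g)`.  Then for `g ∈ GSp₄(ℚ)`,
`ρ_L(g)` fixes `v₀` if and only if `g = ι₀(A)` for some `A ∈ GL₂(ℚ)`: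
the stabiliser of `v₀` in `GSp₄` is the block-diagonally embedded `GL₂`. -/
theorem stabiliser_of_v0_eq_blockdiag_GL2
    (g : Matrix (Fin 4) (Fin 4) ℚ) (hg : IsUnit g)
    (hGSp : ∃ ν : ℚ, ∀ x y : Fin 4 → ℚ,
      stdSympQ (g.mulVec x) (g.mulVec y) = ν * stdSympQ x y) :
    (g.det)⁻¹ • wedge4 (g * iota0 (Matrix.single 0 0 1))
        (g * iota0 (Matrix.single 0 1 1))
        (g * iota0 (Matrix.single 1 0 1))
        (g * iota0 (Matrix.single 1 1 1)) = v0
      ↔ ∃ A : Matrix (Fin 2) (Fin 2) ℚ, IsUnit A ∧ g = iota0 A :=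
  stabiliser_of_v0_eq_blockdiag_GL2_general g hg
end
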